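/- arXiv:2509.11579 — 4 statements merged into one kernel-verified Lean document; each statement's English description precedes it below -/
import Mathlib

section
/- Let c1, c3 \in (0,1) and define S_n = \sum_{k=0}^n \binom{n}{k} c1^k (1-c1)^{n-k} (1 - c3^k)^{n-k}. Then there exists a \in (0,1) and N such that for all n > N, 1 - S_n \le 3 a^n. Concretely, one may take a = max(exp(-c1^2/2), c3^{c1/3}). -/
noncomputable def S (n : ℕ) (c1 c3 : ℝ) : ℝ :=
  ∑ k ∈ Finset.range (n + 1),
    (n.choose k : ℝ) * c1 ^ k * (1 - c1) ^ (n - k) * (1 - c3 ^ k) ^ (n - k)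

/-- `1 - S_n ≤ 3 aⁿ` eventually, with `a = max(exp(-c1²/2), c3^(c1/3)) ∈ (0,1)`. -/
theorem stmt_6 (c1 c3 : ℝ) (hc1 : c1 ∈ Set.Ioo (0 : ℝ) 1) (hc3 : c3 ∈ Set.Ioo (0 : ℝ) 1) :
    ∃ a ∈ Set.Ioo (0 : ℝ) 1, a = max (Real.exp (-c1 ^ 2 / 2)) (c3 ^ (c1 / 3)) ∧
      ∃ N : ℕ, ∀ n : ℕ, N < n → 1 - S n c1 c3 ≤ 3 * a ^ n := by
  obtain ⟨hc1a, hc1b⟩ := hc1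
  obtain ⟨hc3a, hc3b⟩ := hc3
  set a := max (Real.exp (-c1 ^ 2 / 2)) (c3 ^ (c1 / 3)) with ha
  have hexp_pos : 0 < Real.exp (-c1 ^ 2 / 2) := Real.exp_pos _
  have hexp_lt : Real.exp (-c1 ^ 2 / 2) < 1 := by
    rw [Real.exp_lt_one_iff]; nlinarith
  have hrpow_pos : 0 < c3 ^ (c1 / 3) := Real.rpow_pos_of_pos hc3a _
  have hrpow_lt : c3 ^ (c1 / 3) < 1 := Real.rpow_lt_one hc3a.le hc3b (by linarith)
  have ha0 : 0 < a := lt_max_of_lt_left hexp_pos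
  have ha1 : a < 1 := max_lt hexp_lt hrpow_lt
  set b := 1 - c1 * (1 - c3) with hbdef
  have hb0 : 0 < b := by nlinarith
  have hba : b < a := by
    rcases lt_or_ge b (Real.exp (-c1 ^ 2 / 2)) with h | h
    · exact lt_max_of_lt_left h
    · refine lt_max_of_lt_right ?_
      have h1 : 1 - c1 ^ 2 / 2 < Real.exp (-c1 ^ 2 / 2) := by
        have := Real.add_one_lt_exp (x := -c1 ^ 2 / 2) (by nlinarith)
        linarith
      have hx : 1 - c3 < c1 / 2 := by nlinarith
      have hc3half : 1 / 2 < c3 := by nlinarith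
      -- log c3 > -3 (1 - c3)
      have hlog : -3 * (1 - c3) < Real.log c3 := by
        have h2 : Real.log c3⁻¹ ≤ c3⁻¹ - 1 :=
          Real.log_le_sub_one_of_pos (by positivity)
        rw [Real.log_inv] at h2
        have h3 : c3⁻¹ - 1 = (1 - c3) / c3 := by field_simp
        have h4 : (1 - c3) / c3 < 2 * (1 - c3) := by
          rw [div_lt_iff₀ hc3a]; nlinarith
        nlinarith [h2, h3 ▸ h2]
      have h5 : c3 ^ (c1 / 3) = Real.exp ((c1 / 3) * Real.log c3) := by
        rw [Real.rpow_def_of_pos hc3a, mul_comm]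
      have h6 := Real.add_one_le_exp ((c1 / 3) * Real.log c3)
      have h7 : b < 1 + (c1 / 3) * Real.log c3 := by
        have : (c1 / 3) * (-3 * (1 - c3)) < (c1 / 3) * Real.log c3 :=
          mul_lt_mul_of_pos_left hlog (by linarith)
        nlinarith [this]
      rw [h5]; linarith
  -- eventual bound on n * (b/a)^n
  have hdiv : |b / a| < 1 := by
    rw [abs_of_pos (div_pos hb0 ha0)]
    exact (div_lt_one ha0).2 hba
  have htend : Filter.Tendsto (fun n : ℕ => (n : ℝ) * (b / a) ^ n)
      Filter.atTop (nhds 0) := by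
    have := (summable_pow_mul_geometric_of_norm_lt_one (R := ℝ) 1
      (by rwa [Real.norm_eq_abs])).tendsto_atTop_zero
    simpa using this
  have hev : ∀ᶠ n : ℕ in Filter.atTop, (n : ℝ) * (b / a) ^ n < 3 :=
    htend.eventually (gt_mem_nhds (by norm_num))
  obtain ⟨N, hN⟩ := Filter.eventually_atTop.1 hev
  refine ⟨a, ⟨ha0, ha1⟩, rfl, N, fun n hn => ?_⟩
  -- key bound : 1 - S n ≤ n * b ^ n
  have hkey : 1 - S n c1 c3 ≤ (n : ℝ) * b ^ n := by
    have hone : (1 : ℝ) = ∑ k ∈ Finset.range (n + 1),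
        (n.choose k : ℝ) * c1 ^ k * (1 - c1) ^ (n - k) := by
      have h := add_pow c1 (1 - c1) n
      simp only [add_sub_cancel, one_pow] at h
      conv_lhs => rw [h]
      exact Finset.sum_congr rfl fun k _ => by ring
    have hbn : (n : ℝ) * b ^ n = ∑ k ∈ Finset.range (n + 1),
        (n : ℝ) * ((n.choose k : ℝ) * (c1 * c3) ^ k * (1 - c1) ^ (n - k)) := by
      rw [← Finset.mul_sum]
      congr 1
      have h := add_pow (c1 * c3) (1 - c1) n
      have hb' : b = c1 * c3 + (1 - c1) := by rw [hbdef]; ring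
      rw [hb', h]
      exact Finset.sum_congr rfl fun k _ => by ring
    rw [hone, hbn, S, ← Finset.sum_sub_distrib]
    apply Finset.sum_le_sum
    intro k hk
    have hkn : k ≤ n := Nat.lt_succ_iff.mp (Finset.mem_range.mp hk)
    have hc3k0 : 0 ≤ c3 ^ k := by positivity
    have hc3k1 : c3 ^ k ≤ 1 := pow_le_one₀ hc3a.le hc3b.le
    have hcoef : 0 ≤ (n.choose k : ℝ) * c1 ^ k * (1 - c1) ^ (n - k) := by
      apply mul_nonneg (mul_nonneg (by positivity) (by positivity))
      exact pow_nonneg (by linarith) _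
    have hbern : 1 + ((n - k : ℕ) : ℝ) * (-(c3 ^ k)) ≤ (1 + -(c3 ^ k)) ^ (n - k) :=
      one_add_mul_le_pow (by linarith) (n - k)
    have hcast : ((n - k : ℕ) : ℝ) ≤ (n : ℝ) := by
      exact_mod_cast Nat.sub_le n k
    have hterm : 1 - (1 - c3 ^ k) ^ (n - k) ≤ (n : ℝ) * c3 ^ k := by
      have : 1 - ((n - k : ℕ) : ℝ) * c3 ^ k ≤ (1 - c3 ^ k) ^ (n - k) := by
        have := hbern
        rw [sub_eq_add_neg]
        convert this using 2 <;> ring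
      nlinarith [hcast, hc3k0]
    calc (n.choose k : ℝ) * c1 ^ k * (1 - c1) ^ (n - k)
          - (n.choose k : ℝ) * c1 ^ k * (1 - c1) ^ (n - k) * (1 - c3 ^ k) ^ (n - k)
        = ((n.choose k : ℝ) * c1 ^ k * (1 - c1) ^ (n - k))
            * (1 - (1 - c3 ^ k) ^ (n - k)) := by ring
      _ ≤ ((n.choose k : ℝ) * c1 ^ k * (1 - c1) ^ (n - k)) * ((n : ℝ) * c3 ^ k) :=
          mul_le_mul_of_nonneg_left hterm hcoef
      _ = (n : ℝ) * ((n.choose k : ℝ) * (c1 * c3) ^ k * (1 - c1) ^ (n - k)) := by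
          rw [mul_pow]; ring
  have hfin : (n : ℝ) * b ^ n ≤ 3 * a ^ n := by
    have h1 := hN n hn.le
    have han : (0 : ℝ) < a ^ n := by positivity
    have : (n : ℝ) * (b / a) ^ n * a ^ n ≤ 3 * a ^ n :=
      mul_le_mul_of_nonneg_right h1.le han.le
    rwa [div_pow, mul_assoc, div_mul_cancel₀] at this
    positivity
  linarith
end

section
/- Let c1, c3 \in (0,1) and S_n = \sum_{k=0}^n \binom{n}{k} c1^k (1-c1)^{n-k} (1 - c3^k)^{n-k}. Then S_n \to 1 as n \to \infty. -/
theorem stmt_7 (c1 c3 : ℝ) (hc1 : c1 ∈ Set.Ioo (0 : ℝ) 1) (hc3 : c3 ∈ Set.Ioo (0 : ℝ) 1) :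
    Filter.Tendsto (fun n : ℕ => S n c1 c3) Filter.atTop (nhds 1) := by
  obtain ⟨h10, h11⟩ := hc1
  obtain ⟨h30, h31⟩ := hc3
  set a : ℝ := c1 * c3 + (1 - c1) with ha
  have ha0 : 0 ≤ a := by nlinarith
  have ha1 : a < 1 := by nlinarith
  have hbinom : ∀ n : ℕ, ∑ k ∈ Finset.range (n + 1),
      (n.choose k : ℝ) * c1 ^ k * (1 - c1) ^ (n - k) = 1 := by
    intro n
    have h := add_pow c1 (1 - c1) n
    simp only [add_sub_cancel, one_pow] at h
    calc ∑ k ∈ Finset.range (n + 1), (n.choose k : ℝ) * c1 ^ k * (1 - c1) ^ (n - k)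
        = ∑ k ∈ Finset.range (n + 1), c1 ^ k * (1 - c1) ^ (n - k) * (n.choose k : ℝ) :=
          Finset.sum_congr rfl (fun k _ => by ring)
      _ = 1 := h.symm
  have hpowsum : ∀ n : ℕ, ∑ k ∈ Finset.range (n + 1),
      (n.choose k : ℝ) * c1 ^ k * (1 - c1) ^ (n - k) * c3 ^ k = a ^ n := by
    intro n
    have := add_pow (c1 * c3) (1 - c1) n
    rw [← ha] at this
    rw [this]
    apply Finset.sum_congr rfl
    intro k _; rw [mul_pow]; ring
  -- bounds
  have hub : ∀ n : ℕ, S n c1 c3 ≤ 1 := by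
    intro n
    rw [← hbinom n]
    unfold S
    apply Finset.sum_le_sum
    intro k hk
    have hc3k : c3 ^ k ≤ 1 := pow_le_one₀ h30.le h31.le
    have hc3k0 : 0 ≤ c3 ^ k := pow_nonneg h30.le k
    have h1 : (1 - c3 ^ k) ^ (n - k) ≤ 1 :=
      pow_le_one₀ (by linarith) (by linarith)
    have h2 : 0 ≤ (n.choose k : ℝ) * c1 ^ k * (1 - c1) ^ (n - k) :=
      mul_nonneg (mul_nonneg (Nat.cast_nonneg _) (pow_nonneg h10.le _))
        (pow_nonneg (by linarith) _)
    nlinarith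
  have hlb : ∀ n : ℕ, 1 - n * a ^ n ≤ S n c1 c3 := by
    intro n
    have key : ∀ k ∈ Finset.range (n + 1),
        (n.choose k : ℝ) * c1 ^ k * (1 - c1) ^ (n - k)
          - (n : ℝ) * ((n.choose k : ℝ) * c1 ^ k * (1 - c1) ^ (n - k) * c3 ^ k)
          ≤ (n.choose k : ℝ) * c1 ^ k * (1 - c1) ^ (n - k) * (1 - c3 ^ k) ^ (n - k) := by
      intro k hk
      have hc3k : c3 ^ k ≤ 1 := pow_le_one₀ h30.le h31.le
      have hc3k0 : 0 ≤ c3 ^ k := pow_nonneg h30.le k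
      have h2 : (0:ℝ) ≤ (n.choose k : ℝ) * c1 ^ k * (1 - c1) ^ (n - k) :=
        mul_nonneg (mul_nonneg (Nat.cast_nonneg _) (pow_nonneg h10.le _))
          (pow_nonneg (by linarith) _)
      have hbern : 1 - (n - k : ℕ) * c3 ^ k ≤ (1 - c3 ^ k) ^ (n - k) := by
        have := one_add_mul_le_pow (a := -(c3 ^ k)) (by linarith) (n - k)
        calc 1 - (n - k : ℕ) * c3 ^ k = 1 + (n - k : ℕ) * (-(c3 ^ k)) := by ring
        _ ≤ (1 + -(c3 ^ k)) ^ (n - k) := this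
        _ = (1 - c3 ^ k) ^ (n - k) := by ring_nf
      have hnk : ((n - k : ℕ) : ℝ) ≤ (n : ℝ) := by
        exact_mod_cast Nat.cast_le.mpr (Nat.sub_le n k)
      nlinarith [mul_le_mul_of_nonneg_left hbern h2,
        mul_le_mul_of_nonneg_right hnk (mul_nonneg h2 hc3k0)]
    calc 1 - n * a ^ n
        = ∑ k ∈ Finset.range (n + 1),
            ((n.choose k : ℝ) * c1 ^ k * (1 - c1) ^ (n - k)
              - (n : ℝ) * ((n.choose k : ℝ) * c1 ^ k * (1 - c1) ^ (n - k) * c3 ^ k)) := by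
          rw [Finset.sum_sub_distrib, ← Finset.mul_sum, hbinom n, hpowsum n]
      _ ≤ S n c1 c3 := Finset.sum_le_sum key
  -- squeeze
  have hlim : Filter.Tendsto (fun n : ℕ => 1 - n * a ^ n) Filter.atTop (nhds 1) := by
    have := tendsto_self_mul_const_pow_of_lt_one ha0 ha1
    have := (tendsto_const_nhds (x := (1:ℝ)) (f := Filter.atTop (α := ℕ))).sub this
    simpa using this
  exact tendsto_of_tendsto_of_tendsto_of_le_of_le hlim tendsto_const_nhds hlb hub
end

section
/- Let c1, c3 \in (0,1), X_n ~ Bin(n, c1), S_n = E[(1 - c3^{X_n})^{n - X_n}], and b = max(exp(-c1^2/2), c3^{c1/2}) \in (0,1). Then S_{n+1} \ge S_n - 2 b^n for every positive integer n. -/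
lemma key_scalar (c1 c3 : ℝ) (hc1 : c1 ∈ Set.Ioo (0 : ℝ) 1) (hc3 : c3 ∈ Set.Ioo (0 : ℝ) 1) :
    1 - c1 * (1 - c3) ≤ max (Real.exp (-c1 ^ 2 / 2)) (c3 ^ (c1 / 2)) := by
  obtain ⟨h1, h2⟩ := hc1
  obtain ⟨h3, h4⟩ := hc3
  rcases le_or_gt c3 (1 - c1 / 2) with h | h
  · refine le_trans ?_ (le_max_left _ _)
    nlinarith [Real.add_one_le_exp (-c1 ^ 2 / 2)]
  · refine le_trans ?_ (le_max_right _ _)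
    have h6 : (0:ℝ) < Real.exp (2 * (1 - c3)) := Real.exp_pos _
    have key : 1 ≤ c3 * Real.exp (2 * (1 - c3)) := by
      nlinarith [Real.add_one_le_exp (2 * (1 - c3))]
    have hexp : Real.exp (-(2 * (1 - c3))) ≤ c3 := by
      rw [Real.exp_neg]
      nlinarith [mul_inv_cancel₀ (ne_of_gt h6), inv_nonneg.2 h6.le]
    have hlog : -(2 * (1 - c3)) ≤ Real.log c3 := (Real.le_log_iff_exp_le h3).2 hexp
    rw [Real.rpow_def_of_pos h3]
    have hmono : -(c1 * (1 - c3)) ≤ Real.log c3 * (c1 / 2) := by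
      have := mul_le_mul_of_nonneg_left hlog (by linarith : (0:ℝ) ≤ c1 / 2)
      nlinarith
    calc 1 - c1 * (1 - c3) ≤ Real.exp (-(c1 * (1 - c3))) := by
          nlinarith [Real.add_one_le_exp (-(c1 * (1 - c3)))]
      _ ≤ _ := Real.exp_le_exp.2 hmono

lemma S_identity (c1 c3 : ℝ) (n : ℕ) :
    S (n + 1) c1 c3 =
      ∑ k ∈ Finset.range (n + 1),
        (n.choose k : ℝ) * c1 ^ k * (1 - c1) ^ (n - k) *
          ((1 - c1) * (1 - c3 ^ k) ^ (n + 1 - k) + c1 * (1 - c3 ^ (k + 1)) ^ (n - k)) := by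
  unfold S
  rw [Finset.sum_range_succ']
  have h0 : ((n+1).choose 0 : ℝ) * c1 ^ 0 * (1 - c1) ^ (n + 1 - 0) * (1 - c3 ^ 0) ^ (n + 1 - 0)
      = 0 := by simp
  rw [h0, add_zero]
  have hterm : ∀ k ∈ Finset.range (n + 1),
      ((n+1).choose (k+1) : ℝ) * c1 ^ (k+1) * (1 - c1) ^ (n + 1 - (k+1)) *
        (1 - c3 ^ (k+1)) ^ (n + 1 - (k+1))
      = (n.choose k : ℝ) * c1 ^ k * (1 - c1) ^ (n - k) * (c1 * (1 - c3 ^ (k+1)) ^ (n - k))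
        + (n.choose (k+1) : ℝ) * c1 ^ (k+1) * (1 - c1) ^ (n + 1 - (k+1)) *
          (1 - c3 ^ (k+1)) ^ (n + 1 - (k+1)) := by
    intro k hk
    rw [Nat.succ_sub_succ]
    rw [Nat.choose_succ_succ]
    push_cast
    ring
  rw [Finset.sum_congr rfl hterm, Finset.sum_add_distrib]
  have h2 : ∑ k ∈ Finset.range (n + 1),
      ((n.choose (k+1) : ℝ) * c1 ^ (k+1) * (1 - c1) ^ (n + 1 - (k+1)) *
        (1 - c3 ^ (k+1)) ^ (n + 1 - (k+1)))
      = ∑ k ∈ Finset.range (n + 1),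
        (n.choose k : ℝ) * c1 ^ k * (1 - c1) ^ (n - k) * ((1 - c1) * (1 - c3 ^ k) ^ (n + 1 - k)) := by
    have := Finset.sum_range_succ' (fun k => (n.choose k : ℝ) * c1 ^ k * (1 - c1) ^ (n + 1 - k) *
        (1 - c3 ^ k) ^ (n + 1 - k)) (n + 1)
    simp only [Nat.choose_zero_right, pow_zero, Nat.sub_zero, Nat.cast_one, one_mul,
      sub_self, ne_eq] at this
    rw [show ((1 - c1 : ℝ)) ^ (n + 1) * 0 ^ (n + 1) = 0 by simp, add_zero] at this
    have h3 : ∑ k ∈ Finset.range (n + 2),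
        (n.choose k : ℝ) * c1 ^ k * (1 - c1) ^ (n + 1 - k) * (1 - c3 ^ k) ^ (n + 1 - k)
        = ∑ k ∈ Finset.range (n + 1),
          (n.choose k : ℝ) * c1 ^ k * (1 - c1) ^ (n + 1 - k) * (1 - c3 ^ k) ^ (n + 1 - k) := by
      rw [Finset.sum_range_succ]
      simp [Nat.choose_succ_self]
    rw [h3] at this
    rw [← this]
    apply Finset.sum_congr rfl
    intro k hk
    simp only [Finset.mem_range] at hk
    have hnk : n + 1 - k = (n - k) + 1 := by omega
    rw [hnk, pow_succ]
    ring
  rw [h2]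
  rw [← Finset.sum_add_distrib]
  apply Finset.sum_congr rfl
  intro k hk
  simp only [Finset.mem_range] at hk
  have hnk : n + 1 - k = (n - k) + 1 := by omega
  ring

/-- `S_{n+1} ≥ S_n - 2 bⁿ` with `b = max(exp(-c1²/2), c3^(c1/2))`. -/
theorem stmt_17 (c1 c3 : ℝ) (hc1 : c1 ∈ Set.Ioo (0 : ℝ) 1) (hc3 : c3 ∈ Set.Ioo (0 : ℝ) 1)
    (b : ℝ) (hb : b = max (Real.exp (-c1 ^ 2 / 2)) (c3 ^ (c1 / 2)))
    (n : ℕ) (hn : 0 < n) :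
    S (n + 1) c1 c3 ≥ S n c1 c3 - 2 * b ^ n := by
  obtain ⟨h1, h2⟩ := hc1
  obtain ⟨h3, h4⟩ := hc3
  have hbkey : 1 - c1 * (1 - c3) ≤ b := by
    rw [hb]; exact key_scalar c1 c3 ⟨h1, h2⟩ ⟨h3, h4⟩
  have hb0 : 0 < b := by
    rw [hb]; exact lt_max_of_lt_left (Real.exp_pos _)
  -- lower bound S (n+1)
  have hstep : S (n + 1) c1 c3 ≥
      ∑ k ∈ Finset.range (n + 1),
        (n.choose k : ℝ) * c1 ^ k * (1 - c1) ^ (n - k) *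
          ((1 - c3 ^ k) ^ (n - k) - c3 ^ k) := by
    rw [S_identity]
    apply Finset.sum_le_sum
    intro k hk
    simp only [Finset.mem_range] at hk
    have hA : (0:ℝ) ≤ (n.choose k : ℝ) * c1 ^ k * (1 - c1) ^ (n - k) :=
      mul_nonneg (mul_nonneg (Nat.cast_nonneg _) (pow_nonneg h1.le _))
        (pow_nonneg (by linarith) _)
    apply mul_le_mul_of_nonneg_left _ hA
    have hp0 : (0:ℝ) < c3 ^ k := pow_pos h3 k
    have hp1 : c3 ^ k ≤ 1 := pow_le_one₀ h3.le h4.le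
    have hq : c3 ^ (k+1) ≤ c3 ^ k := pow_le_pow_of_le_one h3.le h4.le (Nat.le_succ k)
    have hE1 : (0:ℝ) ≤ (1 - c3 ^ k) ^ (n - k) := pow_nonneg (by linarith) _
    have hE1' : (1 - c3 ^ k) ^ (n - k) ≤ 1 := pow_le_one₀ (by linarith) (by linarith)
    have hE12 : (1 - c3 ^ k) ^ (n - k) ≤ (1 - c3 ^ (k+1)) ^ (n - k) :=
      pow_le_pow_left₀ (by linarith) (by linarith) _
    have hnk : n + 1 - k = (n - k) + 1 := by omega
    rw [hnk, pow_succ]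
    nlinarith [mul_nonneg hE1 hp0.le, mul_le_mul_of_nonneg_left hE12 h1.le,
      mul_nonneg (mul_nonneg hE1 hp0.le) h1.le]
  have hsplit : ∑ k ∈ Finset.range (n + 1),
      (n.choose k : ℝ) * c1 ^ k * (1 - c1) ^ (n - k) * ((1 - c3 ^ k) ^ (n - k) - c3 ^ k)
      = S n c1 c3 - (c1 * c3 + (1 - c1)) ^ n := by
    rw [add_pow]
    unfold S
    rw [← Finset.sum_sub_distrib]
    apply Finset.sum_congr rfl
    intro k hk
    rw [mul_pow]
    ring
  have hpow : (c1 * c3 + (1 - c1)) ^ n ≤ b ^ n := by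
    apply pow_le_pow_left₀ (by nlinarith) (by nlinarith)
  have hbn : (0:ℝ) < b ^ n := pow_pos hb0 n
  calc S (n + 1) c1 c3 ≥ S n c1 c3 - (c1 * c3 + (1 - c1)) ^ n := by
        rw [← hsplit]; exact hstep
    _ ≥ S n c1 c3 - 2 * b ^ n := by nlinarith
end

section
/- Let c1, c3 \in (0,1), S_n as defined, p_n = c (1 - S_n) for a constant c \in (0,1], and b = max(exp(-c1^2/2), c3^{c1/2}). For any \delta > 0, set U = \lceil log_b(\delta(1-b)/2) \rceil. Then for every m > U, p_m \le p_U + \delta; i.e., U is a \delta-suboptimal group size. -/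
lemma aux_nat_id (N k : ℕ) : (N + 1 - k) * (N + 1).choose k = (N + 1) * N.choose k := by
  rw [mul_comm (N + 1 - k), ← Nat.choose_succ_right_eq, Nat.add_one_mul_choose_eq]

lemma aux_sum_one (c1 : ℝ) (n : ℕ) :
    ∑ k ∈ Finset.range (n + 1), (n.choose k : ℝ) * c1 ^ k * (1 - c1) ^ (n - k) = 1 := by
  have h : (∑ k ∈ Finset.range (n + 1), (n.choose k : ℝ) * c1 ^ k * (1 - c1) ^ (n - k))
      = (c1 + (1 - c1)) ^ n := by
    rw [add_pow]
    exact Finset.sum_congr rfl fun k _ => by ring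
  have h1 : c1 + (1 - c1) = 1 := by ring
  rw [h, h1, one_pow]

lemma aux_S_le_one (c1 c3 : ℝ) (hc1 : 0 < c1) (hc1' : c1 < 1) (hc3 : 0 < c3) (hc3' : c3 < 1)
    (n : ℕ) : S n c1 c3 ≤ 1 := by
  have hle : S n c1 c3 ≤ ∑ k ∈ Finset.range (n + 1),
      (n.choose k : ℝ) * c1 ^ k * (1 - c1) ^ (n - k) := by
    rw [S]
    apply Finset.sum_le_sum
    intro k _
    have hck : c3 ^ k ≤ 1 := pow_le_one₀ hc3.le hc3'.le
    have hck0 : (0:ℝ) ≤ c3 ^ k := by positivity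
    have hw : (0 : ℝ) ≤ (n.choose k : ℝ) * c1 ^ k * (1 - c1) ^ (n - k) :=
      mul_nonneg (mul_nonneg (by positivity) (by positivity))
        (pow_nonneg (by linarith) _)
    have h1 : (1 - c3 ^ k) ^ (n - k) ≤ 1 := pow_le_one₀ (by linarith) (by linarith)
    nlinarith [mul_le_mul_of_nonneg_left h1 hw]
  linarith [aux_sum_one c1 n]

/-- Union bound: 1 - S_{N+1} ≤ (N+1)(1-c1) r^N with r = 1-c1+c1*c3. -/
lemma aux_key (c1 c3 : ℝ) (hc1 : 0 < c1) (hc1' : c1 < 1) (hc3 : 0 < c3) (hc3' : c3 < 1)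
    (N : ℕ) :
    1 - S (N + 1) c1 c3 ≤ ((N : ℝ) + 1) * (1 - c1) * (1 - c1 + c1 * c3) ^ N := by
  have h1c : (0:ℝ) ≤ 1 - c1 := by linarith
  have e1 : 1 - S (N + 1) c1 c3 = ∑ k ∈ Finset.range (N + 1 + 1),
      ((N + 1).choose k : ℝ) * c1 ^ k * (1 - c1) ^ (N + 1 - k) *
        (1 - (1 - c3 ^ k) ^ (N + 1 - k)) := by
    have h2 : ∑ k ∈ Finset.range (N + 1 + 1),
        ((N + 1).choose k : ℝ) * c1 ^ k * (1 - c1) ^ (N + 1 - k) *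
          (1 - (1 - c3 ^ k) ^ (N + 1 - k))
        = (∑ k ∈ Finset.range (N + 1 + 1),
            ((N + 1).choose k : ℝ) * c1 ^ k * (1 - c1) ^ (N + 1 - k)) - S (N + 1) c1 c3 := by
      rw [S, ← Finset.sum_sub_distrib]
      exact Finset.sum_congr rfl fun k _ => by ring
    rw [h2, aux_sum_one c1 (N + 1)]
  have step1 : 1 - S (N + 1) c1 c3 ≤
      ∑ k ∈ Finset.range (N + 1 + 1),
        ((N + 1).choose k : ℝ) * c1 ^ k * (1 - c1) ^ (N + 1 - k) *
          (((N + 1 - k : ℕ) : ℝ) * c3 ^ k) := by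
    rw [e1]
    apply Finset.sum_le_sum
    intro k _
    have hw : (0 : ℝ) ≤ ((N + 1).choose k : ℝ) * c1 ^ k * (1 - c1) ^ (N + 1 - k) :=
      mul_nonneg (mul_nonneg (by positivity) (by positivity))
        (pow_nonneg (by linarith) _)
    have hck : c3 ^ k ≤ 1 := pow_le_one₀ hc3.le hc3'.le
    have hbern : 1 - ((N + 1 - k : ℕ) : ℝ) * c3 ^ k ≤ (1 - c3 ^ k) ^ (N + 1 - k) := by
      have h := one_add_mul_le_pow (a := -(c3 ^ k)) (by linarith) (N + 1 - k)
      have hrw : (1 + -(c3 ^ k)) = 1 - c3 ^ k := by ring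
      rw [hrw] at h
      linarith
    have := mul_le_mul_of_nonneg_left hbern hw
    nlinarith
  have step2 : ∑ k ∈ Finset.range (N + 1 + 1),
      ((N + 1).choose k : ℝ) * c1 ^ k * (1 - c1) ^ (N + 1 - k) *
        (((N + 1 - k : ℕ) : ℝ) * c3 ^ k)
      = ((N : ℝ) + 1) * (1 - c1) * (1 - c1 + c1 * c3) ^ N := by
    rw [Finset.sum_range_succ]
    have hlast : (N + 1 - (N + 1) : ℕ) = 0 := by omega
    rw [hlast]
    simp only [Nat.cast_zero, zero_mul, mul_zero, add_zero]
    have hterm : ∀ k ∈ Finset.range (N + 1),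
        ((N + 1).choose k : ℝ) * c1 ^ k * (1 - c1) ^ (N + 1 - k) *
          (((N + 1 - k : ℕ) : ℝ) * c3 ^ k)
        = ((N : ℝ) + 1) * (1 - c1) *
            ((N.choose k : ℝ) * (c1 * c3) ^ k * (1 - c1) ^ (N - k)) := by
      intro k hk
      have hkN : k ≤ N := by simpa [Nat.lt_succ_iff] using hk
      have hid : (((N + 1 - k : ℕ) : ℝ)) * ((N + 1).choose k : ℝ)
          = ((N : ℝ) + 1) * (N.choose k : ℝ) := by
        exact_mod_cast congrArg (Nat.cast : ℕ → ℝ) (aux_nat_id N k)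
      have hpow : (1 - c1) ^ (N + 1 - k) = (1 - c1) ^ (N - k) * (1 - c1) := by
        have hsub : N + 1 - k = (N - k) + 1 := by omega
        rw [hsub, pow_succ]
      rw [hpow, mul_pow]
      linear_combination (c1 ^ k * c3 ^ k * (1 - c1) ^ (N - k) * (1 - c1)) * hid
    rw [Finset.sum_congr rfl hterm, ← Finset.mul_sum]
    have hbin : ∑ k ∈ Finset.range (N + 1),
        (N.choose k : ℝ) * (c1 * c3) ^ k * (1 - c1) ^ (N - k)
        = (c1 * c3 + (1 - c1)) ^ N := by
      rw [add_pow]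
      exact Finset.sum_congr rfl fun k _ => by ring
    rw [hbin]
    ring_nf
  linarith [step1, le_of_eq step2]

/-- Geometric: (k+1) r^k (b-r) ≤ b^(k+1) for 0 ≤ r ≤ b. -/
lemma aux_geom (r b : ℝ) (hr : 0 ≤ r) (hrb : r ≤ b) :
    ∀ k : ℕ, ((k : ℝ) + 1) * r ^ k * (b - r) ≤ b ^ (k + 1) := by
  intro k
  induction k with
  | zero => simpa using sub_le_self b hr
  | succ k ih =>
    have hpow : r ^ (k + 1) ≤ b ^ (k + 1) := pow_le_pow_left₀ hr hrb (k + 1)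
    have h1 : r * (((k : ℝ) + 1) * r ^ k * (b - r)) ≤ r * b ^ (k + 1) :=
      mul_le_mul_of_nonneg_left ih hr
    have h2 : r ^ (k + 1) * (b - r) ≤ b ^ (k + 1) * (b - r) :=
      mul_le_mul_of_nonneg_right hpow (by linarith)
    have hc : (((k : ℕ) + 1 : ℕ) : ℝ) = (k : ℝ) + 1 := by push_cast; ring
    rw [hc]
    calc ((k : ℝ) + 1 + 1) * r ^ (k + 1) * (b - r)
        = r * (((k : ℝ) + 1) * r ^ k * (b - r)) + r ^ (k + 1) * (b - r) := by ring
      _ ≤ r * b ^ (k + 1) + b ^ (k + 1) * (b - r) := by linarith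
      _ = b ^ (k + 2) := by ring

/-- The quantitative gap: (1-c1)(1-b) ≤ 2(b - r). -/
lemma aux_gap (c1 c3 b : ℝ) (hc1 : 0 < c1) (hc1' : c1 < 1) (hc3 : 0 < c3) (hc3' : c3 < 1)
    (hb : b = max (Real.exp (-c1 ^ 2 / 2)) (c3 ^ (c1 / 2))) :
    (1 - c1) * (1 - b) ≤ 2 * (b - (1 - c1 + c1 * c3)) := by
  have main : 3 - 3 * c1 + 2 * c1 * c3 ≤ b * (3 - c1) := by
    by_cases hx : c1 * (3 - c1) / 4 ≤ 1 - c3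
    · have hb1 : Real.exp (-c1 ^ 2 / 2) ≤ b := by rw [hb]; exact le_max_left _ _
      have hexp : 1 - c1 ^ 2 / 2 ≤ Real.exp (-c1 ^ 2 / 2) := by
        have := Real.add_one_le_exp (-c1 ^ 2 / 2)
        linarith
      nlinarith
    · push_neg at hx
      have hb2 : c3 ^ (c1 / 2) ≤ b := by rw [hb]; exact le_max_right _ _
      have hrpow : 1 + c1 / 2 * Real.log c3 ≤ c3 ^ (c1 / 2) := by
        rw [Real.rpow_def_of_pos hc3]
        have := Real.add_one_le_exp (Real.log c3 * (c1 / 2))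
        linarith
      have hlog : c3 - 1 ≤ c3 * Real.log c3 := by
        have h1 : Real.log (1 / c3) ≤ 1 / c3 - 1 :=
          Real.log_le_sub_one_of_pos (by positivity)
        rw [one_div, Real.log_inv] at h1
        have h3 : c3 * (-Real.log c3) ≤ c3 * (c3⁻¹ - 1) :=
          mul_le_mul_of_nonneg_left h1 hc3.le
        have h4 : c3 * c3⁻¹ = 1 := mul_inv_cancel₀ (ne_of_gt hc3)
        nlinarith
      have hcb : c3 - c1 / 2 * (1 - c3) ≤ c3 * b := by
        have h5 : c3 * (1 + c1 / 2 * Real.log c3) ≤ c3 * b :=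
          mul_le_mul_of_nonneg_left (le_trans hrpow hb2) hc3.le
        nlinarith
      have h7 : 3 - c1 ≤ 4 * c3 := by nlinarith [sq_nonneg (1 - c1)]
      have h8 : c3 * (3 - 3 * c1 + 2 * c1 * c3) ≤ (c3 - c1 / 2 * (1 - c3)) * (3 - c1) := by
        nlinarith [mul_nonneg (mul_nonneg hc1.le (by linarith : (0:ℝ) ≤ 1 - c3))
          (by linarith : (0:ℝ) ≤ 4 * c3 - (3 - c1))]
      have h9 : (c3 - c1 / 2 * (1 - c3)) * (3 - c1) ≤ c3 * b * (3 - c1) :=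
        mul_le_mul_of_nonneg_right hcb (by linarith)
      have h10 : c3 * (3 - 3 * c1 + 2 * c1 * c3) ≤ c3 * (b * (3 - c1)) := by
        nlinarith
      exact le_of_mul_le_mul_left h10 hc3
  nlinarith

set_option maxHeartbeats 1000000 in
/-- With `p_n = c (1 - S_n)`, `b = max(exp(-c1²/2), c3^(c1/2))` and
`U = ⌈log_b (δ(1-b)/2)⌉`, every `m > U` satisfies `p_m ≤ p_U + δ`:
`U` is a `δ`-suboptimal group size. -/
theorem stmt_19 (c1 c3 : ℝ) (hc1 : c1 ∈ Set.Ioo (0 : ℝ) 1) (hc3 : c3 ∈ Set.Ioo (0 : ℝ) 1)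
    (c : ℝ) (hc : c ∈ Set.Ioc (0 : ℝ) 1) (p : ℕ → ℝ) (hp : ∀ n, p n = c * (1 - S n c1 c3))
    (b : ℝ) (hb : b = max (Real.exp (-c1 ^ 2 / 2)) (c3 ^ (c1 / 2)))
    (δ : ℝ) (hδ : 0 < δ) (U : ℕ) (hU : U = ⌈Real.logb b (δ * (1 - b) / 2)⌉₊) :
    ∀ m : ℕ, U < m → p m ≤ p U + δ := by
  obtain ⟨hc10, hc11⟩ := hc1
  obtain ⟨hc30, hc31⟩ := hc3
  set r : ℝ := 1 - c1 + c1 * c3 with hr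
  have hr0 : 0 < r := by nlinarith [mul_pos hc10 hc30]
  have hb0 : 0 < b := by
    rw [hb]; exact lt_max_of_lt_left (Real.exp_pos _)
  have hb1 : b < 1 := by
    rw [hb]
    apply max_lt
    · have h := Real.exp_lt_exp.mpr (show -c1 ^ 2 / 2 < 0 by nlinarith)
      simpa using h
    · exact Real.rpow_lt_one hc30.le hc31 (by linarith)
  have hgap : (1 - c1) * (1 - b) ≤ 2 * (b - r) := aux_gap c1 c3 b hc10 hc11 hc30 hc31 hb
  have hP : 0 < (1 - c1) * (1 - b) := mul_pos (by linarith) (by linarith)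
  have hbr0 : 0 < b - r := by linarith
  have hrb : r ≤ b := by linarith
  have hA : 0 < δ * (1 - b) / 2 := by
    have := mul_pos hδ (show (0:ℝ) < 1 - b by linarith)
    linarith
  have hbU : b ^ U ≤ δ * (1 - b) / 2 := by
    have hle : Real.logb b (δ * (1 - b) / 2) ≤ (U : ℝ) := by
      rw [hU]; exact Nat.le_ceil _
    have h := Real.rpow_le_rpow_of_exponent_ge hb0 hb1.le hle
    rwa [Real.rpow_logb hb0 (by linarith) hA, Real.rpow_natCast] at h
  intro m hm
  obtain ⟨N, rfl⟩ : ∃ N, m = N + 1 := ⟨m - 1, by omega⟩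
  have hkey : 1 - S (N + 1) c1 c3 ≤ ((N : ℝ) + 1) * (1 - c1) * r ^ N :=
    aux_key c1 c3 hc10 hc11 hc30 hc31 N
  have hgeom : ((N : ℝ) + 1) * r ^ N * (b - r) ≤ b ^ (N + 1) := aux_geom r b hr0.le hrb N
  have hL4 : ((N : ℝ) + 1) * (1 - c1) * r ^ N * (1 - b) ≤ 2 * b ^ N := by
    have hbb : b ^ (N + 1) ≤ b ^ N := pow_le_pow_of_le_one hb0.le hb1.le (by omega)
    have h1 : (((N : ℝ) + 1) * (1 - c1) * r ^ N * (1 - b)) * (2 * (b - r))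
        = (((N : ℝ) + 1) * r ^ N * (b - r)) * (2 * ((1 - c1) * (1 - b))) := by ring
    have h2 : (((N : ℝ) + 1) * r ^ N * (b - r)) * (2 * ((1 - c1) * (1 - b)))
        ≤ b ^ (N + 1) * (2 * (2 * (b - r))) := by
      apply mul_le_mul hgeom (by linarith) (by linarith) (by positivity)
    have h3 : b ^ (N + 1) * (2 * (2 * (b - r))) ≤ b ^ N * (2 * (2 * (b - r))) :=
      mul_le_mul_of_nonneg_right hbb (by linarith)
    have h4 : (((N : ℝ) + 1) * (1 - c1) * r ^ N * (1 - b)) * (2 * (b - r))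
        ≤ (2 * b ^ N) * (2 * (b - r)) := by
      rw [h1]
      calc (((N : ℝ) + 1) * r ^ N * (b - r)) * (2 * ((1 - c1) * (1 - b)))
          ≤ b ^ (N + 1) * (2 * (2 * (b - r))) := h2
        _ ≤ b ^ N * (2 * (2 * (b - r))) := h3
        _ = (2 * b ^ N) * (2 * (b - r)) := by ring
    exact le_of_mul_le_mul_right h4 (by linarith)
  have hmono : b ^ N ≤ b ^ U := pow_le_pow_of_le_one hb0.le hb1.le (by omega)
  have hSm : (1 - S (N + 1) c1 c3) * (1 - b) ≤ δ * (1 - b) := by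
    have h5 : (1 - S (N + 1) c1 c3) * (1 - b) ≤ ((N : ℝ) + 1) * (1 - c1) * r ^ N * (1 - b) :=
      mul_le_mul_of_nonneg_right hkey (by linarith)
    calc (1 - S (N + 1) c1 c3) * (1 - b)
        ≤ ((N : ℝ) + 1) * (1 - c1) * r ^ N * (1 - b) := h5
      _ ≤ 2 * b ^ N := hL4
      _ ≤ 2 * b ^ U := by linarith
      _ ≤ 2 * (δ * (1 - b) / 2) := by linarith
      _ = δ * (1 - b) := by ring
  have hdelta : 1 - S (N + 1) c1 c3 ≤ δ :=
    le_of_mul_le_mul_right (by linarith) (by linarith : (0:ℝ) < 1 - b)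
  have hSU : S U c1 c3 ≤ 1 := aux_S_le_one c1 c3 hc10 hc11 hc30 hc31 U
  rw [hp, hp]
  obtain ⟨hc0, hcle⟩ := hc
  linarith [mul_le_mul_of_nonneg_left hdelta hc0.le, mul_le_mul_of_nonneg_left hSU hc0.le,
    mul_nonneg (by linarith : (0:ℝ) ≤ 1 - c) hδ.le]
end
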